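/- Let 0 < λ < 1 and let π be an admissible pair configuration which in addition factorizes as π(x,y) = π(x)·π(y)/S for all x,y ≥ 1, where S := ∑_{z≥1} π(z). Set q̄ := 2S. Then for every x ≥ 1, (2/x)·∑_{y≥1} R(x,y) = 2λ·(q(x−1) − q(x)) + q(x+1) − q(x) + ((1 − q(0))/q̄)·((x+1)·q(x+1) − x·q(x)); that is, under the independence assumption the pair drift collapses to the mean-field drift with d = 2. -/

import Mathlib

open scoped BigOperators

/-- `π(x) = ∑_{y≥1} π(x,y)`, the row sum of a pair configuration. -/
noncomputable def rowSum (p : ℕ → ℕ → ℝ) (x : ℕ) : ℝ := ∑' y : ℕ, p x (y + 1)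

/-- An admissible pair configuration: nonnegative, symmetric, vanishing when an
index is `0` (the boundary convention), with finite first moment and positive
row sums. -/
def AdmissiblePair (p : ℕ → ℕ → ℝ) : Prop :=
  (∀ x y, 0 ≤ p x y) ∧ (∀ x y, p x y = p y x) ∧
    (∀ y, p 0 y = 0) ∧ (∀ x, p x 0 = 0) ∧
    Summable (fun xy : ℕ × ℕ => ((xy.1 : ℝ) + 1) * p (xy.1 + 1) (xy.2 + 1)) ∧
    (∀ x : ℕ, 1 ≤ x → 0 < rowSum p x)

/-- `h(x) = (x−1)·∑_{y≥1} π(x,y)/(y·π(x))`. -/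
noncomputable def hPS (p : ℕ → ℕ → ℝ) (x : ℕ) : ℝ :=
  ((x : ℝ) - 1) * ∑' y : ℕ, p x (y + 1) / (((y : ℝ) + 1) * rowSum p x)

/-- `q(x) = 2π(x)/x` for `x ≥ 1` and `q(0) = 1 − ∑_{x≥1} q(x)`. -/
noncomputable def qPS (p : ℕ → ℕ → ℝ) (x : ℕ) : ℝ :=
  if x = 0 then 1 - ∑' z : ℕ, 2 * rowSum p (z + 1) / ((z : ℝ) + 1)
  else 2 * rowSum p x / (x : ℝ)

/-- The PS pair drift `R(x,y)`, for `x, y ≥ 1`. -/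
noncomputable def RPS (lam : ℝ) (p : ℕ → ℕ → ℝ) (x y : ℕ) : ℝ :=
  lam * qPS p (x - 1) * qPS p (y - 1)
    + 2 * lam * (p (x - 1) y + p x (y - 1) - 2 * p x y)
    + p (x + 1) y * (hPS p (x + 1) + (x : ℝ) / ((x : ℝ) + 1))
    + p x (y + 1) * (hPS p (y + 1) + (y : ℝ) / ((y : ℝ) + 1))
    - p x y * (2 + hPS p x + hPS p y)

/-! Summing `R(x, ·)` over `y`, the terms `π(x,y+1)·h(y+1)` and `π(x,y)·h(y)` cancel (a shift,
since `h(1) = 0`; both series converge as `0 ≤ h(y) ≤ y − 1`) and `∑_y q(y−1) = 1`, which leaves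
an expression in `π(x−1), π(x), π(x+1), h(x), h(x+1)` and `∑_y π(x,y)/y`. Under independence
`∑_y π(x,y)/y = π(x)·c` and `h(x) = (x−1)·c` with `c = (∑_y π(y)/y)/S = (1 − q(0))/q̄`;
substituting `π(x) = x·q(x)/2` gives the mean-field drift. -/

theorem HasSum.nat_succ_of_apply_zero {f : ℕ → ℝ} {a : ℝ} (hf : HasSum f a) (h0 : f 0 = 0) :
    HasSum (fun n => f (n + 1)) a := by
  simpa [h0] using (hasSum_nat_add_iff' 1).mpr hf

theorem qPS_zero (p : ℕ → ℕ → ℝ) :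
    qPS p 0 = 1 - 2 * ∑' z : ℕ, rowSum p (z + 1) / ((z : ℝ) + 1) := by
  simp only [qPS, if_pos, ← tsum_mul_left, mul_div_assoc]

theorem tsum_rowSum_div_eq (p : ℕ → ℕ → ℝ) :
    ∑' z : ℕ, rowSum p (z + 1) / ((z : ℝ) + 1) = (1 - qPS p 0) / 2 := by
  rw [qPS_zero]
  ring

theorem qPS_succ (p : ℕ → ℕ → ℝ) (x : ℕ) :
    qPS p (x + 1) = 2 * rowSum p (x + 1) / ((x : ℝ) + 1) := by
  simp [qPS]

theorem hPS_eq_mul_div (p : ℕ → ℕ → ℝ) (x : ℕ) :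
    hPS p x = ((x : ℝ) - 1) * ((∑' y : ℕ, p x (y + 1) / ((y : ℝ) + 1)) / rowSum p x) := by
  simp only [hPS, ← tsum_div_const, div_div]

theorem hPS_one (p : ℕ → ℕ → ℝ) : hPS p 1 = 0 := by
  simp [hPS]

theorem RPS_succ_succ (lam : ℝ) (p : ℕ → ℕ → ℝ) (x y : ℕ) :
    RPS lam p (x + 1) (y + 1) =
      lam * qPS p x * qPS p y
        + 2 * lam * (p x (y + 1) + p (x + 1) y - 2 * p (x + 1) (y + 1))
        + p (x + 2) (y + 1) * (hPS p (x + 2) + ((x : ℝ) + 1) / ((x : ℝ) + 2))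
        + p (x + 1) (y + 2) * hPS p (y + 2) - p (x + 1) (y + 1) * hPS p (y + 1)
        + (p (x + 1) (y + 2) - p (x + 1) (y + 2) / ((y : ℝ) + 2))
        - p (x + 1) (y + 1) * (2 + hPS p (x + 1)) := by
  simp only [RPS, Nat.add_sub_cancel]
  push_cast
  field_simp
  ring

namespace AdmissiblePair

variable {p : ℕ → ℕ → ℝ}

theorem nonneg (hp : AdmissiblePair p) (x y : ℕ) : 0 ≤ p x y := hp.1 x y

theorem symm (hp : AdmissiblePair p) (x y : ℕ) : p x y = p y x := hp.2.1 x y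

theorem zero_left (hp : AdmissiblePair p) (y : ℕ) : p 0 y = 0 := hp.2.2.1 y

theorem zero_right (hp : AdmissiblePair p) (x : ℕ) : p x 0 = 0 := hp.2.2.2.1 x

theorem summable_moment (hp : AdmissiblePair p) :
    Summable fun xy : ℕ × ℕ => ((xy.1 : ℝ) + 1) * p (xy.1 + 1) (xy.2 + 1) :=
  hp.2.2.2.2.1

theorem rowSum_pos (hp : AdmissiblePair p) {x : ℕ} (hx : 1 ≤ x) : 0 < rowSum p x :=
  hp.2.2.2.2.2 x hx

theorem rowSum_nonneg (hp : AdmissiblePair p) (x : ℕ) : 0 ≤ rowSum p x :=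
  tsum_nonneg fun _ => hp.nonneg _ _

theorem rowSum_zero (hp : AdmissiblePair p) : rowSum p 0 = 0 := by
  simp [rowSum, hp.zero_left]

theorem rowSum_eq_mul_qPS (hp : AdmissiblePair p) (x : ℕ) : rowSum p x = x * qPS p x / 2 := by
  cases x with
  | zero => simp [hp.rowSum_zero]
  | succ x =>
    rw [qPS_succ]
    push_cast
    field_simp

theorem summable_row (hp : AdmissiblePair p) (x : ℕ) : Summable fun y => p x (y + 1) := by
  cases x with
  | zero => simp [hp.zero_left, summable_zero]
  | succ x =>
    refine ((hp.summable_moment.prod_factor x).mul_left ((x : ℝ) + 1)⁻¹).congr fun y => ?_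
    field_simp

theorem hasSum_row (hp : AdmissiblePair p) (x : ℕ) :
    HasSum (fun y => p x (y + 1)) (rowSum p x) :=
  (hp.summable_row x).hasSum

theorem hasSum_row' (hp : AdmissiblePair p) (x : ℕ) : HasSum (fun y => p x y) (rowSum p x) := by
  rw [← hasSum_nat_add_iff' 1]
  simpa [hp.zero_right x] using hp.hasSum_row x

theorem summable_row_div (hp : AdmissiblePair p) (x : ℕ) :
    Summable fun y : ℕ => p x (y + 1) / ((y : ℝ) + 1) :=
  (hp.summable_row x).of_nonneg_of_le (fun _ => div_nonneg (hp.nonneg _ _) (by positivity))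
    fun _ => div_le_self (hp.nonneg _ _) (by simp)

/-- By symmetry, this is the first moment of the column `π(·, x)`. -/
theorem summable_natCast_mul_row (hp : AdmissiblePair p) (x : ℕ) :
    Summable fun y : ℕ => (y : ℝ) * p x (y + 1) := by
  cases x with
  | zero => simp [hp.zero_left, summable_zero]
  | succ x =>
    refine (hp.summable_moment.prod_symm.prod_factor x).of_nonneg_of_le
      (fun y => mul_nonneg y.cast_nonneg (hp.nonneg _ _)) fun y => ?_
    rw [hp.symm]
    exact mul_le_mul_of_nonneg_right (by simp) (hp.nonneg _ _)

theorem summable_rowSum (hp : AdmissiblePair p) : Summable fun z : ℕ => rowSum p (z + 1) := by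
  have hnn : 0 ≤ fun zy : ℕ × ℕ => p (zy.1 + 1) (zy.2 + 1) := fun _ => hp.nonneg _ _
  have hpair : Summable fun zy : ℕ × ℕ => p (zy.1 + 1) (zy.2 + 1) :=
    hp.summable_moment.of_nonneg_of_le hnn fun _ => le_mul_of_one_le_left (hp.nonneg _ _) (by simp)
  exact ((summable_prod_of_nonneg hnn).mp hpair).2

theorem summable_rowSum_div (hp : AdmissiblePair p) :
    Summable fun z : ℕ => rowSum p (z + 1) / ((z : ℝ) + 1) :=
  hp.summable_rowSum.of_nonneg_of_le
    (fun _ => div_nonneg (hp.rowSum_nonneg _) (by positivity))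
    fun _ => div_le_self (hp.rowSum_nonneg _) (by simp)

theorem hasSum_qPS (hp : AdmissiblePair p) : HasSum (qPS p) 1 := by
  rw [← hasSum_nat_add_iff' 1]
  simpa [qPS_succ, qPS_zero, mul_div_assoc] using hp.summable_rowSum_div.hasSum.mul_left 2

theorem hPS_succ_nonneg (hp : AdmissiblePair p) (y : ℕ) : 0 ≤ hPS p (y + 1) := by
  rw [hPS_eq_mul_div]
  push_cast
  exact mul_nonneg (by simp) (div_nonneg
    (tsum_nonneg fun _ => div_nonneg (hp.nonneg _ _) (by positivity)) (hp.rowSum_nonneg _))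

theorem hPS_succ_le (hp : AdmissiblePair p) (y : ℕ) : hPS p (y + 1) ≤ y := by
  have hle : ∑' z : ℕ, p (y + 1) (z + 1) / ((z : ℝ) + 1) ≤ rowSum p (y + 1) :=
    Summable.tsum_le_tsum (fun _ => div_le_self (hp.nonneg _ _) (by simp))
      (hp.summable_row_div _) (hp.summable_row _)
  rw [hPS_eq_mul_div]
  push_cast
  rw [add_sub_cancel_right]
  exact mul_le_of_le_one_right y.cast_nonneg (div_le_one_of_le₀ hle (hp.rowSum_nonneg _))

theorem summable_mul_hPS (hp : AdmissiblePair p) (x : ℕ) :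
    Summable fun y => p x (y + 1) * hPS p (y + 1) :=
  (hp.summable_natCast_mul_row x).of_nonneg_of_le
    (fun y => mul_nonneg (hp.nonneg _ _) (hp.hPS_succ_nonneg y))
    fun y => by
      rw [mul_comm]
      exact mul_le_mul_of_nonneg_right (hp.hPS_succ_le y) (hp.nonneg _ _)

theorem hasSum_RPS (hp : AdmissiblePair p) (lam : ℝ) (x : ℕ) :
    HasSum (fun y => RPS lam p (x + 1) (y + 1))
      (lam * qPS p x + 2 * lam * (rowSum p x - rowSum p (x + 1))
        + rowSum p (x + 2) * (hPS p (x + 2) + ((x : ℝ) + 1) / ((x : ℝ) + 2))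
        - rowSum p (x + 1) * (1 + hPS p (x + 1))
        - ∑' y : ℕ, p (x + 1) (y + 1) / ((y : ℝ) + 1)) := by
  have hh := (hp.summable_mul_hPS (x + 1)).hasSum
  have hh_shift := hh.nat_succ_of_apply_zero (by simp [hPS_one])
  have hdiv := (hp.hasSum_row (x + 1)).sub (hp.summable_row_div (x + 1)).hasSum
  have hdiv_shift := hdiv.nat_succ_of_apply_zero (by simp)
  have hsum := (((((hp.hasSum_qPS.mul_left (lam * qPS p x)).add
    (((hp.hasSum_row x).add (hp.hasSum_row' (x + 1))).sub
      ((hp.hasSum_row (x + 1)).mul_left 2) |>.mul_left (2 * lam))).add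
    ((hp.hasSum_row (x + 2)).mul_right (hPS p (x + 2) + ((x : ℝ) + 1) / ((x : ℝ) + 2)))).add
    (hh_shift.sub hh)).add hdiv_shift).sub ((hp.hasSum_row (x + 1)).mul_right (2 + hPS p (x + 1)))
  have hRPS := hsum.congr_fun (g := fun y => RPS lam p (x + 1) (y + 1)) fun y => by
    rw [RPS_succ_succ]
    push_cast
    ring
  convert hRPS using 1
  · rfl
  · ring

end AdmissiblePair

def PairIndependent (p : ℕ → ℕ → ℝ) : Prop :=
  ∀ x y : ℕ, 1 ≤ x → 1 ≤ y → p x y = rowSum p x * rowSum p y / (∑' z : ℕ, rowSum p (z + 1))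

namespace PairIndependent

variable {p : ℕ → ℕ → ℝ}

theorem tsum_div_eq (hind : PairIndependent p) {x : ℕ} (hx : 1 ≤ x) :
    ∑' y : ℕ, p x (y + 1) / ((y : ℝ) + 1) =
      rowSum p x * ((1 - qPS p 0) / (2 * ∑' z : ℕ, rowSum p (z + 1))) := by
  have hterm : ∀ y : ℕ, p x (y + 1) / ((y : ℝ) + 1) =
      rowSum p x / (∑' z : ℕ, rowSum p (z + 1)) * (rowSum p (y + 1) / ((y : ℝ) + 1)) := by
    intro y
    rw [hind x (y + 1) hx (by omega)]
    ring
  rw [tsum_congr hterm, tsum_mul_left, tsum_rowSum_div_eq]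
  ring

theorem hPS_eq (hind : PairIndependent p) (hp : AdmissiblePair p) {x : ℕ} (hx : 1 ≤ x) :
    hPS p x = ((x : ℝ) - 1) * ((1 - qPS p 0) / (2 * ∑' z : ℕ, rowSum p (z + 1))) := by
  rw [hPS_eq_mul_div, hind.tsum_div_eq hx, mul_div_cancel_left₀ _ (hp.rowSum_pos hx).ne']

end PairIndependent

theorem ps_pair_drift_collapses_to_mean_field_general
    (lam : ℝ)
    (p : ℕ → ℕ → ℝ) (hp : AdmissiblePair p)
    (hfac : ∀ x y : ℕ, 1 ≤ x → 1 ≤ y →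
      p x y = rowSum p x * rowSum p y / (∑' z : ℕ, rowSum p (z + 1))) :
    ∀ x : ℕ, 1 ≤ x →
      Summable (fun y : ℕ => RPS lam p x (y + 1)) ∧
      (2 / (x : ℝ)) * (∑' y : ℕ, RPS lam p x (y + 1)) =
        2 * lam * (qPS p (x - 1) - qPS p x) + qPS p (x + 1) - qPS p x +
          (1 - qPS p 0) / (2 * ∑' z : ℕ, rowSum p (z + 1)) *
            (((x : ℝ) + 1) * qPS p (x + 1) - (x : ℝ) * qPS p x) := by
  intro x hx
  obtain ⟨n, rfl⟩ : ∃ n, x = n + 1 := ⟨x - 1, by omega⟩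
  have hind : PairIndependent p := hfac
  have hsum := hp.hasSum_RPS lam n
  refine ⟨hsum.summable, ?_⟩
  rw [hsum.tsum_eq, hind.hPS_eq hp (x := n + 2) (by omega), hind.hPS_eq hp (x := n + 1) (by omega),
    hind.tsum_div_eq (x := n + 1) (by omega), hp.rowSum_eq_mul_qPS n,
    hp.rowSum_eq_mul_qPS (n + 1), hp.rowSum_eq_mul_qPS (n + 2), Nat.add_sub_cancel]
  push_cast
  field_simp
  ring

theorem ps_pair_drift_collapses_to_mean_field
    (lam : ℝ) (hlam0 : 0 < lam) (hlam1 : lam < 1)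
    (p : ℕ → ℕ → ℝ) (hp : AdmissiblePair p)
    (hfac : ∀ x y : ℕ, 1 ≤ x → 1 ≤ y →
      p x y = rowSum p x * rowSum p y / (∑' z : ℕ, rowSum p (z + 1))) :
    ∀ x : ℕ, 1 ≤ x →
      Summable (fun y : ℕ => RPS lam p x (y + 1)) ∧
      (2 / (x : ℝ)) * (∑' y : ℕ, RPS lam p x (y + 1)) =
        2 * lam * (qPS p (x - 1) - qPS p x) + qPS p (x + 1) - qPS p x +
          (1 - qPS p 0) / (2 * ∑' z : ℕ, rowSum p (z + 1)) *
            (((x : ℝ) + 1) * qPS p (x + 1) - (x : ℝ) * qPS p x) :=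
  ps_pair_drift_collapses_to_mean_field_general lam p hp hfac
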